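/- For the deterministic ODE dx_t/dt = (β_t/σ_t²)(x_t − x_0) run backwards from x_T = x_1 on (0,T], where σ_t² = ∫_0^t β_τ dτ, the solution is x_t = x_0 + (σ_t²/σ_T²)(x_1 − x_0); consequently x_t → x_0 as t → 0⁺, i.e., the OT-ODE transports the terminal point x_1 to the initial point x_0 along the straight segment between them. -/

import Mathlib

open MeasureTheory intervalIntegral Filter Topology

/-- For the deterministic OT-ODE dx_t/dt = (β_t/σ_t²)(x_t − x₀) on (0,T]
with terminal condition x_T = x₁, where σ_t² = ∫_0^t β, the solution is
x_t = x₀ + (σ_t²/σ_T²)(x₁ − x₀); consequently x_t → x₀ as t → 0⁺, i.e. the ODE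
transports x₁ to x₀ along the straight segment between them. -/
theorem stmt4 {d : ℕ} {T : ℝ} (hT : 0 < T) (β : ℝ → ℝ)
    (hβcont : ContinuousOn β (Set.Icc 0 T)) (hβpos : ∀ τ ∈ Set.Ioc 0 T, 0 < β τ)
    (σ2 : ℝ → ℝ) (hσ2 : ∀ t, σ2 t = ∫ τ in (0:ℝ)..t, β τ)
    (x0 x1 : EuclideanSpace ℝ (Fin d)) (x : ℝ → EuclideanSpace ℝ (Fin d))
    (hxT : x T = x1)
    (hODE : ∀ t ∈ Set.Ioc 0 T, HasDerivAt x ((β t / σ2 t) • (x t - x0)) t) :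
    (∀ t ∈ Set.Ioc 0 T, x t = x0 + (σ2 t / σ2 T) • (x1 - x0)) ∧
    Tendsto x (𝓝[>] 0) (𝓝 x0) := by
  have hσ2fun : σ2 = fun t => ∫ τ in (0:ℝ)..t, β τ := funext hσ2
  -- positivity of σ2 on (0, T]
  have hβint : ∀ t ∈ Set.Ioc 0 T, IntervalIntegrable β volume 0 t := by
    intro t ht
    have hsub : Set.uIcc 0 t ⊆ Set.Icc 0 T := by
      rw [Set.uIcc_of_le ht.1.le]
      exact Set.Icc_subset_Icc_right ht.2
    exact (hβcont.mono hsub).intervalIntegrable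
  have hσpos : ∀ t ∈ Set.Ioc 0 T, 0 < σ2 t := by
    intro t ht
    rw [hσ2]
    refine intervalIntegral_pos_of_pos_on (hβint t ht) ?_ ht.1
    intro s hs
    exact hβpos s ⟨hs.1, hs.2.le.trans ht.2⟩
  have hσT : 0 < σ2 T := hσpos T ⟨hT, le_rfl⟩
  -- derivative of σ2 on the open interval
  have hσderiv : ∀ t ∈ Set.Ioo 0 T, HasDerivAt σ2 (β t) t := by
    intro t ht
    rw [hσ2fun]
    refine integral_hasDerivAt_right (hβint t ⟨ht.1, ht.2.le⟩) ?_ ?_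
    · exact (hβcont.mono Set.Ioo_subset_Icc_self).stronglyMeasurableAtFilter
        isOpen_Ioo t ht
    · exact (hβcont.mono Set.Ioo_subset_Icc_self).continuousAt
        (Ioo_mem_nhds ht.1 ht.2)
  -- continuity of σ2 on [0, T]
  have hσcont : ContinuousOn σ2 (Set.Icc 0 T) := by
    rw [hσ2fun]
    have := intervalIntegral.continuousOn_primitive_interval (a := 0) (b := T)
      (f := β) (μ := volume)
      ((hβcont.mono (by rw [Set.uIcc_of_le hT.le])).integrableOn_compact
        (by rw [Set.uIcc_of_le hT.le]; exact isCompact_Icc))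
    rwa [Set.uIcc_of_le hT.le] at this
  -- the function g = σ2⁻¹ • (x - x0) is constant on (0, T]
  set g : ℝ → EuclideanSpace ℝ (Fin d) := fun t => (σ2 t)⁻¹ • (x t - x0) with hg
  have hgderiv : ∀ t ∈ Set.Ioo 0 T, HasDerivAt g 0 t := by
    intro t ht
    have ht' : t ∈ Set.Ioc 0 T := ⟨ht.1, ht.2.le⟩
    have hne : σ2 t ≠ 0 := (hσpos t ht').ne'
    have h1 : HasDerivAt (fun s => (σ2 s)⁻¹) (-(β t) / (σ2 t) ^ 2) t :=
      (hσderiv t ht).inv hne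
    have h2 := h1.smul ((hODE t ht').sub_const x0)
    convert h2 using 1
    case e'_4 => rfl
    case e'_5 => rfl
    case e'_6 => rfl
    case e'_8 => rfl
    rw [smul_smul, ← add_smul]
    have : (σ2 t)⁻¹ * (β t / σ2 t) + -β t / σ2 t ^ 2 = 0 := by
      field_simp
      ring
    rw [this, zero_smul]
  have hgconst : ∀ t ∈ Set.Ioc 0 T, g T = g t := by
    intro t ht
    have hcont : ContinuousOn g (Set.Icc t T) := by
      intro s hs
      have hs' : s ∈ Set.Ioc 0 T := ⟨ht.1.trans_le hs.1, hs.2⟩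
      have hxcont : ContinuousWithinAt x (Set.Icc t T) s :=
        (hODE s hs').continuousAt.continuousWithinAt
      have hσc : ContinuousWithinAt σ2 (Set.Icc t T) s :=
        hσcont.mono (Set.Icc_subset_Icc ht.1.le le_rfl) s hs
      exact (hσc.inv₀ (hσpos s hs').ne').smul (hxcont.sub continuousWithinAt_const)
    have := constant_of_has_deriv_right_zero hcont
      (fun s hs => ((hgderiv s ⟨ht.1.trans_le hs.1, hs.2⟩).hasDerivWithinAt))
      T ⟨ht.2, le_rfl⟩
    exact this
  have key : ∀ t ∈ Set.Ioc 0 T, x t = x0 + (σ2 t / σ2 T) • (x1 - x0) := by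
    intro t ht
    have h := (hgconst t ht).symm
    simp only [hg, hxT] at h
    have hne : σ2 t ≠ 0 := (hσpos t ht).ne'
    have : x t - x0 = (σ2 t / σ2 T) • (x1 - x0) := by
      have h2 := congrArg (fun v => σ2 t • v) h
      simp only [smul_smul, mul_inv_cancel₀ hne, one_smul] at h2
      rw [h2, div_eq_mul_inv]
    rw [← this]; abel
  refine ⟨key, ?_⟩
  have hσ0 : σ2 0 = 0 := by rw [hσ2, intervalIntegral.integral_same]
  have hσtend : Tendsto σ2 (𝓝[>] 0) (𝓝 0) := by
    have h1 : Tendsto σ2 (𝓝[Set.Icc 0 T] 0) (𝓝 0) := by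
      have := hσcont 0 ⟨le_rfl, hT.le⟩
      rwa [ContinuousWithinAt, hσ0] at this
    refine h1.mono_left (nhdsWithin_le_iff.2 ?_)
    have h2 : Set.Iio T ∈ 𝓝[>] (0:ℝ) := mem_nhdsWithin_of_mem_nhds (Iio_mem_nhds hT)
    filter_upwards [h2, self_mem_nhdsWithin] with s hs1 hs2
    exact ⟨le_of_lt hs2, le_of_lt hs1⟩
  have hlim : Tendsto (fun t => x0 + (σ2 t / σ2 T) • (x1 - x0)) (𝓝[>] 0) (𝓝 x0) := by
    have : Tendsto (fun t => (σ2 t / σ2 T)) (𝓝[>] 0) (𝓝 0) := by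
      simpa using hσtend.div_const (σ2 T)
    have h3 : Tendsto (fun t => x0 + (σ2 t / σ2 T) • (x1 - x0)) (𝓝[>] 0)
        (𝓝 (x0 + (0:ℝ) • (x1 - x0))) :=
      tendsto_const_nhds.add (this.smul tendsto_const_nhds)
    simpa using h3
  refine hlim.congr' ?_
  have h2 : Set.Iio T ∈ 𝓝[>] (0:ℝ) := mem_nhdsWithin_of_mem_nhds (Iio_mem_nhds hT)
  filter_upwards [h2, self_mem_nhdsWithin] with s hs1 hs2
  exact (key s ⟨hs2, le_of_lt hs1⟩).symm
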